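/- arXiv:2408.02366 — 5 statements merged into one kernel-verified Lean document; each statement's English description precedes it below -/
import Mathlib

section
/- A congruence C on the tropical Laurent polynomial semiring T[X₁^±, …, Xₙ^±] is proper if and only if (f, -∞) ∈ C implies f = -∞. -/
noncomputable section

open Tropical

/-- The tropical semifield `T = ℝ ∪ {-∞}` with ⊕ = max and ⊙ = +, realized as the
tropicalization of the order dual of `ℝ` with a top element adjoined (so that the
Mathlib min-plus convention becomes max-plus, and `0 = -∞`). -/
abbrev T : Type := Tropical (WithTop ℝᵒᵈ)

/-- The tropical Laurent polynomial semiring `T[X₁^±, …, Xₙ^±]`. -/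
abbrev TLaurent (n : ℕ) : Type := AddMonoidAlgebra T (Fin n → ℤ)

/-- Evaluation of a tropical Laurent polynomial at a point of `ℝⁿ`:
the tropical sum (max) over the terms `c ⊙ X^⊙m` of `c + ⟨m, x⟩`. -/
noncomputable def teval {n : ℕ} (f : TLaurent n) (x : Fin n → ℝ) : T :=
  f.coeff.sum fun m c => c * trop (↑(OrderDual.toDual (∑ i, (m i : ℝ) * x i)) : WithTop ℝᵒᵈ)

/-! Tropical addition is idempotent, so a tropical Laurent polynomial `f` is unchanged by adding
one of its own terms `c X^m`. Hence if `f ~ 0` then also `c X^m = 0 + c X^m ~ f + c X^m = f ~ 0`.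
For `c ≠ -∞` the monomial `c X^m` is a unit of the Laurent semiring, so `1 ~ 0` and the congruence
is everything. -/

namespace RingCon

variable {R : Type*} [Semiring R] (C : RingCon R)

theorem rel_zero_of_add_eq {g a : R} (hg : C g 0) (h : g + a = g) : C a 0 := by
  have hga : C (g + a) (0 + a) := C.add hg (C.refl a)
  rw [h, zero_add] at hga
  exact C.trans (C.symm hga) hg

theorem forall_rel_of_rel_one_zero (h : C 1 0) (a b : R) : C a b := by
  have rel_zero (x : R) : C x 0 := by simpa using C.mul (C.refl x) h
  exact C.trans (rel_zero a) (C.symm (rel_zero b))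

theorem forall_rel_of_isUnit_of_rel_zero {u : R} (hu : IsUnit u) (h : C u 0) (a b : R) :
    C a b := by
  obtain ⟨v, hvu⟩ := hu.exists_left_inv
  refine C.forall_rel_of_rel_one_zero ?_ a b
  simpa [hvu] using C.mul (C.refl v) h

theorem not_forall_rel_iff_of_exists_isUnit_add_eq [Nontrivial R]
    (h : ∀ f : R, f ≠ 0 → ∃ u, IsUnit u ∧ f + u = f) :
    (¬ ∀ a b : R, C a b) ↔ ∀ f : R, C f 0 → f = 0 := by
  constructor
  · intro hproper f hf
    by_contra hf0
    obtain ⟨u, hu, hfu⟩ := h f hf0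
    exact hproper (C.forall_rel_of_isUnit_of_rel_zero hu (C.rel_zero_of_add_eq hf hfu))
  · intro hzero hfull
    exact one_ne_zero (hzero 1 (hfull 1 0))

end RingCon

theorem Tropical.isUnit_of_ne_zero {R : Type*} [LinearOrderedAddCommGroupWithTop R]
    {x : Tropical R} (hx : x ≠ 0) : IsUnit x := by
  have hx' : untrop x ≠ ⊤ := fun h => hx (untrop_injective h)
  refine IsUnit.of_mul_eq_one (trop (-untrop x)) (untrop_injective ?_)
  simp [LinearOrderedAddCommGroupWithTop.add_neg_cancel_of_ne_top hx']

namespace AddMonoidAlgebra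

theorem isUnit_single {k G : Type*} [Semiring k] [AddGroup G] {m : G} {c : k}
    (hc : IsUnit c) : IsUnit (single m c) :=
  ⟨⟨single m c, single (-m) ↑hc.unit⁻¹, by simp [one_def], by simp [one_def]⟩, rfl⟩

theorem add_single_coeff_self {k G : Type*} [Semiring k] (hk : ∀ a : k, a + a = a)
    (f : AddMonoidAlgebra k G) (m : G) : f + single m (f.coeff m) = f := by
  refine coeff_injective (Finsupp.ext fun m' => ?_)
  rcases eq_or_ne m m' with rfl | hm
  · simp [coeff_add, coeff_single, hk]
  · simp [coeff_add, coeff_single, hm]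

end AddMonoidAlgebra

theorem TLaurent.exists_isUnit_add_eq {n : ℕ} {f : TLaurent n} (hf : f ≠ 0) :
    ∃ u, IsUnit u ∧ f + u = f := by
  obtain ⟨m, hm⟩ : ∃ m, f.coeff m ≠ 0 := by
    by_contra! h
    exact hf (AddMonoidAlgebra.coeff_injective (Finsupp.ext h))
  exact ⟨_, AddMonoidAlgebra.isUnit_single (Tropical.isUnit_of_ne_zero hm),
    AddMonoidAlgebra.add_single_coeff_self Tropical.add_self f m⟩

/-- A congruence `C` on the tropical Laurent polynomial semiring is proper (not the
full relation) if and only if `(f, -∞) ∈ C` implies `f = -∞` (here `-∞` is the zero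
element). -/
theorem ringCon_proper_iff (n : ℕ) (C : RingCon (TLaurent n)) :
    (¬ ∀ a b : TLaurent n, C a b) ↔ (∀ f : TLaurent n, C f 0 → f = 0) :=
  C.not_forall_rel_iff_of_exists_isUnit_add_eq fun _ => TLaurent.exists_isUnit_add_eq
end
end

section
/- Let P be a prime congruence on the tropical Laurent polynomial semiring T[X₁^±, …, Xₙ^±] (or on the tropical rational function semifield in n variables). Then the congruence variety V(P) = {x ∈ Rⁿ : f(x) = g(x) for all (f,g) ∈ P} contains at most one point. -/
noncomputable section

open Tropical

/-- A congruence `C` on a commutative semiring is prime if it is proper and the twisted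
product `α ⋊ β := (α₁β₁ + α₂β₂, α₁β₂ + α₂β₁)` belonging to `C` forces `α ∈ C` or `β ∈ C`. -/
def IsPrimeRingCon {S : Type*} [CommSemiring S] (C : RingCon S) : Prop :=
  (¬ ∀ a b : S, C a b) ∧
    ∀ a₁ a₂ b₁ b₂ : S, C (a₁ * b₁ + a₂ * b₂) (a₁ * b₂ + a₂ * b₁) → C a₁ a₂ ∨ C b₁ b₂

/-!
If `x ≠ y` lie in `V(P)`, say `xᵢ < c < yᵢ`, put `a = c` and `b = Xᵢ`. By additive idempotence
the twisted product `(a, a ⊕ b) ⋊ (b, a ⊕ b)` lies in the diagonal, so primality puts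
`(c, c ⊕ Xᵢ)` or `(Xᵢ, c ⊕ Xᵢ)` into `P`. The first pair separates at `y`, the second at `x`.
-/

lemma IsPrimeRingCon.rel_add_or_rel_add {S : Type*} [CommSemiring S] {C : RingCon S}
    (hC : IsPrimeRingCon C) (hidem : ∀ a : S, a + a = a) (a b : S) :
    C a (a + b) ∨ C b (a + b) := by
  refine hC.2 a (a + b) b (a + b) ?_
  -- both sides expand to `ab + a² + b²`, using `ab + ab = ab`
  have expand : (a + b) * (a + b) = a * b + (a * a + (b * a + b * b)) := by ring
  have twisted : a * b + (a + b) * (a + b) = a * (a + b) + (a + b) * b := by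
    rw [expand, ← add_assoc, hidem, ← expand]
    ring
  rw [twisted]
  exact C.refl _

lemma TLaurent.add_self {n : ℕ} (f : TLaurent n) : f + f = f := by
  ext m
  rw [AddMonoidAlgebra.coeff_add, Finsupp.add_apply, Tropical.add_self]

abbrev tropReal (r : ℝ) : T := trop (↑(OrderDual.toDual r) : WithTop ℝᵒᵈ)

lemma tropReal_injective : Function.Injective tropReal := fun _ _ h =>
  OrderDual.toDual.injective (WithTop.coe_injective (trop_injective h))

lemma tropReal_add (r s : ℝ) : tropReal r + tropReal s = tropReal (max r s) := by
  rw [trop_add_def]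
  rfl

lemma teval_add {n : ℕ} (f g : TLaurent n) (x : Fin n → ℝ) :
    teval (f + g) x = teval f x + teval g x := by
  unfold teval
  rw [AddMonoidAlgebra.coeff_add]
  exact Finsupp.sum_add_index' (fun _ => zero_mul _) (fun _ _ _ => add_mul _ _ _)

lemma teval_single {n : ℕ} (m : Fin n → ℤ) (c : T) (x : Fin n → ℝ) :
    teval (AddMonoidAlgebra.single m c) x = c * tropReal (∑ i, (m i : ℝ) * x i) :=
  Finsupp.sum_single_index (zero_mul _)

lemma teval_single_zero {n : ℕ} (r : ℝ) (x : Fin n → ℝ) :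
    teval (AddMonoidAlgebra.single 0 (tropReal r)) x = tropReal r := by
  simp [teval_single, tropReal]

lemma teval_single_var {n : ℕ} (i : Fin n) (x : Fin n → ℝ) :
    teval (AddMonoidAlgebra.single (Pi.single i 1) 1) x = tropReal (x i) := by
  simp [teval_single, Pi.single_apply]

def congruenceVariety {n : ℕ} (P : RingCon (TLaurent n)) : Set (Fin n → ℝ) :=
  {x | ∀ f g : TLaurent n, P f g → teval f x = teval g x}

lemma le_or_le_of_mem_congruenceVariety {n : ℕ} {P : RingCon (TLaurent n)}
    (hP : IsPrimeRingCon P) {x y : Fin n → ℝ} (hx : x ∈ congruenceVariety P)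
    (hy : y ∈ congruenceVariety P) (i : Fin n) (c : ℝ) : y i ≤ c ∨ c ≤ x i := by
  rcases hP.rel_add_or_rel_add TLaurent.add_self
    (AddMonoidAlgebra.single 0 (tropReal c)) (AddMonoidAlgebra.single (Pi.single i 1) 1)
    with h | h
  · have hy := hy _ _ h
    rw [teval_add, teval_single_zero, teval_single_var, tropReal_add] at hy
    exact .inl (max_eq_left_iff.mp (tropReal_injective hy).symm)
  · have hx := hx _ _ h
    rw [teval_add, teval_single_zero, teval_single_var, tropReal_add] at hx
    exact .inr (max_eq_right_iff.mp (tropReal_injective hx).symm)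

lemma apply_le_of_mem_congruenceVariety {n : ℕ} {P : RingCon (TLaurent n)}
    (hP : IsPrimeRingCon P) {x y : Fin n → ℝ} (hx : x ∈ congruenceVariety P)
    (hy : y ∈ congruenceVariety P) (i : Fin n) : y i ≤ x i := by
  by_contra! hlt
  obtain ⟨c, hxc, hcy⟩ := exists_between hlt
  rcases le_or_le_of_mem_congruenceVariety hP hx hy i c with h | h
  · exact h.not_gt hcy
  · exact h.not_gt hxc

/-- The congruence variety of a prime congruence on the tropical Laurent polynomial
semiring contains at most one point. -/
theorem congruence_variety_of_prime_subsingleton (n : ℕ) (P : RingCon (TLaurent n))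
    (hP : IsPrimeRingCon P) :
    Set.Subsingleton
      {x : Fin n → ℝ | ∀ f g : TLaurent n, P f g → teval f x = teval g x} := by
  intro x hx y hy
  funext i
  exact le_antisymm (apply_le_of_mem_congruenceVariety hP hy hx i)
    (apply_le_of_mem_congruenceVariety hP hx hy i)
end
end

section
/- Let S₁, S₂ be semifields over T. The pseudodirect product S₁ ⋈ S₂ := {(s₁,s₂) : s₁ ≠ 0, s₂ ≠ 0} ∪ {(0,0)}, with componentwise operations, is a semifield over T via the diagonal embedding t ↦ (t,t). -/
noncomputable section

open Tropical

/-! Through `T`, whose addition is idempotent, each `Sᵢ` inherits `a + a = a`, so a sum of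
elements vanishes only when each summand does: this closes `S₁ ⋈ S₂` under addition.
Invertibility of nonzero elements excludes zero divisors, which closes it under
multiplication. -/

def pseudodirect (S₁ S₂ : Type*) [Zero S₁] [Zero S₂] : Set (S₁ × S₂) :=
  {p | (p.1 ≠ 0 ∧ p.2 ≠ 0) ∨ p = 0}

theorem add_self_of_ringHom {R S : Type*} [NonAssocSemiring R] [NonAssocSemiring S]
    (f : R →+* S) (hR : ∀ a : R, a + a = a) (a : S) : a + a = a :=
  calc a + a = a * (f 1 + f 1) := by rw [mul_add, map_one, mul_one]
    _ = a := by rw [← map_add, hR, map_one, mul_one]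

theorem eq_zero_of_add_eq_zero_of_add_self {M : Type*} [AddMonoid M] (hM : ∀ a : M, a + a = a)
    {a b : M} (h : a + b = 0) : a = 0 :=
  calc a = a + (a + b) := by rw [h, add_zero]
    _ = 0 := by rw [← add_assoc, hM, h]

theorem noZeroDivisors_of_exists_mul_eq_one {S : Type*} [CommMonoidWithZero S]
    (hinv : ∀ a : S, a ≠ 0 → ∃ b, a * b = 1) : NoZeroDivisors S where
  eq_zero_or_eq_zero_of_mul_eq_zero {a b} hab := by
    refine or_iff_not_imp_left.mpr fun ha => ?_
    obtain ⟨c, hc⟩ := hinv a ha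
    exact ((IsUnit.of_mul_eq_one c hc).mul_right_eq_zero).mp hab

theorem ne_zero_of_mul_eq_one {M : Type*} [MulZeroOneClass M] {a b : M} (ha : a ≠ 0)
    (hab : a * b = 1) : b ≠ 0 := by
  rintro rfl
  exact ha (by rw [← mul_one a, ← hab, mul_zero, mul_zero])

section Pseudodirect

variable {S₁ S₂ : Type*}

theorem zero_mem_pseudodirect [Zero S₁] [Zero S₂] : (0 : S₁ × S₂) ∈ pseudodirect S₁ S₂ :=
  Or.inr rfl

theorem one_mem_pseudodirect [MulZeroOneClass S₁] [MulZeroOneClass S₂] [Nontrivial S₁]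
    [Nontrivial S₂] : (1 : S₁ × S₂) ∈ pseudodirect S₁ S₂ :=
  Or.inl ⟨one_ne_zero, one_ne_zero⟩

theorem diagonal_mem_pseudodirect {R : Type*} [NonAssocSemiring R] [NonAssocSemiring S₁]
    [NonAssocSemiring S₂] (f₁ : R →+* S₁) (f₂ : R →+* S₂) (hf₁ : Function.Injective f₁)
    (hf₂ : Function.Injective f₂) (t : R) : (f₁ t, f₂ t) ∈ pseudodirect S₁ S₂ := by
  by_cases ht : t = 0
  · subst ht
    exact Or.inr (by simp)
  · exact Or.inl ⟨(map_ne_zero_iff f₁ hf₁).mpr ht, (map_ne_zero_iff f₂ hf₂).mpr ht⟩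

theorem add_mem_pseudodirect [AddMonoid S₁] [AddMonoid S₂] (h₁ : ∀ a : S₁, a + a = a)
    (h₂ : ∀ a : S₂, a + a = a) {p q : S₁ × S₂} (hp : p ∈ pseudodirect S₁ S₂)
    (hq : q ∈ pseudodirect S₁ S₂) : p + q ∈ pseudodirect S₁ S₂ := by
  rcases hp with ⟨hp₁, hp₂⟩ | rfl
  · rcases hq with hq | rfl
    · exact Or.inl ⟨fun h => hp₁ (eq_zero_of_add_eq_zero_of_add_self h₁ h),
        fun h => hp₂ (eq_zero_of_add_eq_zero_of_add_self h₂ h)⟩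
    · rw [add_zero]
      exact Or.inl ⟨hp₁, hp₂⟩
  · rwa [zero_add]

theorem mul_mem_pseudodirect [MulZeroClass S₁] [MulZeroClass S₂] [NoZeroDivisors S₁]
    [NoZeroDivisors S₂] {p q : S₁ × S₂} (hp : p ∈ pseudodirect S₁ S₂)
    (hq : q ∈ pseudodirect S₁ S₂) : p * q ∈ pseudodirect S₁ S₂ := by
  rcases hp with ⟨hp₁, hp₂⟩ | rfl
  · rcases hq with ⟨hq₁, hq₂⟩ | rfl
    · exact Or.inl ⟨mul_ne_zero hp₁ hq₁, mul_ne_zero hp₂ hq₂⟩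
    · exact Or.inr (mul_zero p)
  · exact Or.inr (zero_mul q)

theorem exists_mul_eq_one_of_mem_pseudodirect [MulZeroOneClass S₁] [MulZeroOneClass S₂]
    (hinv₁ : ∀ a : S₁, a ≠ 0 → ∃ b, a * b = 1) (hinv₂ : ∀ a : S₂, a ≠ 0 → ∃ b, a * b = 1)
    {p : S₁ × S₂} (hp : p ∈ pseudodirect S₁ S₂) (hp₀ : p ≠ 0) :
    ∃ q ∈ pseudodirect S₁ S₂, p * q = 1 := by
  obtain ⟨hp₁, hp₂⟩ := hp.resolve_right hp₀
  obtain ⟨b₁, hb₁⟩ := hinv₁ p.1 hp₁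
  obtain ⟨b₂, hb₂⟩ := hinv₂ p.2 hp₂
  exact ⟨(b₁, b₂), Or.inl ⟨ne_zero_of_mul_eq_one hp₁ hb₁, ne_zero_of_mul_eq_one hp₂ hb₂⟩,
    Prod.ext hb₁ hb₂⟩

end Pseudodirect

/-- Let `S₁`, `S₂` be semifields over `T` (commutative semirings with injective semiring
homomorphisms from `T`, in which every nonzero element is invertible). Then the
pseudodirect product `S₁ ⋈ S₂ = {(s₁,s₂) : s₁ ≠ 0, s₂ ≠ 0} ∪ {(0,0)}` with
componentwise operations is a semifield over `T` via the diagonal `t ↦ (τ₁ t, τ₂ t)`: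
it contains `0`, `1`, the diagonal image of `T`, is closed under the componentwise
addition and multiplication, `1 ≠ 0`, and every nonzero element has an inverse in it. -/
theorem pseudodirect_product_is_semifield_over_T
    (S₁ S₂ : Type*) [CommSemiring S₁] [CommSemiring S₂]
    (τ₁ : T →+* S₁) (τ₂ : T →+* S₂)
    (hτ₁ : Function.Injective τ₁) (hτ₂ : Function.Injective τ₂)
    (hinv₁ : ∀ a : S₁, a ≠ 0 → ∃ b, a * b = 1)
    (hinv₂ : ∀ a : S₂, a ≠ 0 → ∃ b, a * b = 1) :
    (0 : S₁ × S₂) ∈ {p : S₁ × S₂ | (p.1 ≠ 0 ∧ p.2 ≠ 0) ∨ p = 0} ∧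
    (1 : S₁ × S₂) ∈ {p : S₁ × S₂ | (p.1 ≠ 0 ∧ p.2 ≠ 0) ∨ p = 0} ∧
    (∀ t : T, (τ₁ t, τ₂ t) ∈ {p : S₁ × S₂ | (p.1 ≠ 0 ∧ p.2 ≠ 0) ∨ p = 0}) ∧
    (∀ p q : S₁ × S₂, ((p.1 ≠ 0 ∧ p.2 ≠ 0) ∨ p = 0) → ((q.1 ≠ 0 ∧ q.2 ≠ 0) ∨ q = 0) →
      ((p + q).1 ≠ 0 ∧ (p + q).2 ≠ 0) ∨ p + q = 0) ∧
    (∀ p q : S₁ × S₂, ((p.1 ≠ 0 ∧ p.2 ≠ 0) ∨ p = 0) → ((q.1 ≠ 0 ∧ q.2 ≠ 0) ∨ q = 0) →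
      ((p * q).1 ≠ 0 ∧ (p * q).2 ≠ 0) ∨ p * q = 0) ∧
    (1 : S₁ × S₂) ≠ 0 ∧
    (Function.Injective fun t : T => ((τ₁ t, τ₂ t) : S₁ × S₂)) ∧
    (∀ p : S₁ × S₂, ((p.1 ≠ 0 ∧ p.2 ≠ 0) ∨ p = 0) → p ≠ 0 →
      ∃ q : S₁ × S₂, (((q.1 ≠ 0 ∧ q.2 ≠ 0) ∨ q = 0) ∧ p * q = 1)) := by
  have : Nontrivial S₁ := hτ₁.nontrivial
  have : Nontrivial S₂ := hτ₂.nontrivial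
  have : NoZeroDivisors S₁ := noZeroDivisors_of_exists_mul_eq_one hinv₁
  have : NoZeroDivisors S₂ := noZeroDivisors_of_exists_mul_eq_one hinv₂
  refine ⟨zero_mem_pseudodirect, one_mem_pseudodirect,
    diagonal_mem_pseudodirect τ₁ τ₂ hτ₁ hτ₂,
    fun p q => add_mem_pseudodirect (add_self_of_ringHom τ₁ Tropical.add_self)
      (add_self_of_ringHom τ₂ Tropical.add_self),
    fun p q => mul_mem_pseudodirect, one_ne_zero,
    fun _ _ h => hτ₁ (congrArg Prod.fst h),
    fun p hp hp₀ => exists_mul_eq_one_of_mem_pseudodirect hinv₁ hinv₂ hp hp₀⟩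
end
end

section
/- Let ψ : T(X₁,…,Xₙ) → S₁ ⋈ S₂ be a surjective T-algebra homomorphism from the tropical rational function semifield to a pseudodirect product of semifields over T, with ψᵢ = πᵢ ∘ ψ. Then V(Ker(ψ₁)) ∩ V(Ker(ψ₂)) = ∅. -/
/-!
Take the tropical constant `t = 1 ∈ ℝ`, a unit of `T` different from `1_T = 0 ∈ ℝ`. A point `x`
of `V(Ker ψᵢ)` separates the constants `0` and `1`, so `Sᵢ` is nontrivial and `τ₁ t ≠ 0`. By
surjectivity onto the pseudodirect product some `f` has `ψ f = (τ₁ t, 1)`. At a point `x` of both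
varieties, `f` agrees with the constant `t` (same image under `ψ₁`) and with the constant `1`
(same image under `ψ₂`), so `t = 1`.
-/

noncomputable section

open Tropical

def kerVariety {R X A S : Type*} (ev : R → X → A) (f : R → S) : Set X :=
  {x | ∀ a b, f a = f b → ev a x = ev b x}

theorem nontrivial_of_mem_kerVariety {R X A S : Type*} [Semiring R] [Semiring A] [Nontrivial A]
    [Semiring S] (ev : R →+* (X → A)) (f : R →+* S) {x : X} (hx : x ∈ kerVariety ev f) :
    Nontrivial S := by
  by_contra hS
  rw [not_nontrivial_iff_subsingleton] at hS
  have h := hx 0 1 (Subsingleton.elim _ _)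
  rw [map_zero, map_one] at h
  exact zero_ne_one h

theorem isUnit_trop_one : IsUnit (trop ((1 : ℝᵒᵈ) : WithTop ℝᵒᵈ) : T) := by
  refine IsUnit.of_mul_eq_one (trop ((-1 : ℝᵒᵈ) : WithTop ℝᵒᵈ)) ?_
  rw [← trop_add, ← WithTop.coe_add, add_neg_cancel, WithTop.coe_zero, trop_zero]

theorem trop_one_ne_one : (trop ((1 : ℝᵒᵈ) : WithTop ℝᵒᵈ) : T) ≠ 1 := by
  rw [Ne, ← untrop_inj_iff]
  simp

theorem congruence_varieties_of_factors_disjoint_general (n : ℕ)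
    (R : Type*) [CommSemiring R]
    (ev : R →+* ((Fin n → ℝ) → T))
    (τR : T →+* R) (hconst : ∀ t : T, ev (τR t) = fun _ => t)
    (S₁ S₂ : Type*) [CommSemiring S₁] [CommSemiring S₂]
    (τ₁ : T →+* S₁) (τ₂ : T →+* S₂)
    (ψ : R →+* S₁ × S₂) (hψτ : ∀ t : T, ψ (τR t) = (τ₁ t, τ₂ t))
    (hsurj : ∀ p : S₁ × S₂, ((p.1 ≠ 0 ∧ p.2 ≠ 0) ∨ p = 0) → ∃ r : R, ψ r = p) :
    {x : Fin n → ℝ | ∀ a b : R, (ψ a).1 = (ψ b).1 → ev a x = ev b x} ∩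
      {x : Fin n → ℝ | ∀ a b : R, (ψ a).2 = (ψ b).2 → ev a x = ev b x} = ∅ := by
  refine Set.eq_empty_of_forall_notMem fun x ⟨hx₁, hx₂⟩ => ?_
  have : Nontrivial S₁ := nontrivial_of_mem_kerVariety ev ((RingHom.fst S₁ S₂).comp ψ) hx₁
  have : Nontrivial S₂ := nontrivial_of_mem_kerVariety ev ((RingHom.snd S₁ S₂).comp ψ) hx₂
  set t : T := trop ((1 : ℝᵒᵈ) : WithTop ℝᵒᵈ)
  obtain ⟨f, hf⟩ := hsurj (τ₁ t, 1) (Or.inl ⟨(isUnit_trop_one.map τ₁).ne_zero, one_ne_zero⟩)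
  refine trop_one_ne_one ?_
  calc t = ev (τR t) x := by rw [hconst]
    _ = ev f x := hx₁ _ _ (by rw [hf, hψτ])
    _ = ev 1 x := hx₂ _ _ (by rw [hf, map_one]; rfl)
    _ = 1 := by rw [map_one, Pi.one_apply]

/-- Let `ψ` be a surjective `T`-algebra homomorphism from the tropical rational function
semifield in `n` variables (whose elements are functions `ℝⁿ → T`, modeled by a
commutative semiring `R` with an injective evaluation homomorphism `ev` into the
semiring of functions, under which the `T`-algebra structure `τR` is by constants)
onto the pseudodirect product `S₁ ⋈ S₂` of semifields over `T`, and let `ψᵢ = πᵢ ∘ ψ`.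
Then `V(Ker ψ₁) ∩ V(Ker ψ₂) = ∅`. -/
theorem congruence_varieties_of_factors_disjoint (n : ℕ)
    (R : Type*) [CommSemiring R]
    (ev : R →+* ((Fin n → ℝ) → T)) (hev : Function.Injective ev)
    (τR : T →+* R) (hconst : ∀ t : T, ev (τR t) = fun _ => t)
    (S₁ S₂ : Type*) [CommSemiring S₁] [CommSemiring S₂]
    (τ₁ : T →+* S₁) (τ₂ : T →+* S₂)
    (hτ₁ : Function.Injective τ₁) (hτ₂ : Function.Injective τ₂)
    (hinv₁ : ∀ a : S₁, a ≠ 0 → ∃ b, a * b = 1)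
    (hinv₂ : ∀ a : S₂, a ≠ 0 → ∃ b, a * b = 1)
    (ψ : R →+* S₁ × S₂) (hψτ : ∀ t : T, ψ (τR t) = (τ₁ t, τ₂ t))
    (hrange : ∀ r : R, ((ψ r).1 ≠ 0 ∧ (ψ r).2 ≠ 0) ∨ ψ r = 0)
    (hsurj : ∀ p : S₁ × S₂, ((p.1 ≠ 0 ∧ p.2 ≠ 0) ∨ p = 0) → ∃ r : R, ψ r = p) :
    {x : Fin n → ℝ | ∀ a b : R, (ψ a).1 = (ψ b).1 → ev a x = ev b x} ∩
      {x : Fin n → ℝ | ∀ a b : R, (ψ a).2 = (ψ b).2 → ev a x = ev b x} = ∅ :=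
  congruence_varieties_of_factors_disjoint_general n R ev τR hconst S₁ S₂ τ₁ τ₂ ψ hψτ hsurj
end
end

section
/- Let ψᵢ (i = 1,2) be as in the pseudodirect product setting, and suppose Ker(ψᵢ) = E(V(Ker(ψᵢ))) for i = 1, 2, where E(W) is the congruence of all pairs of tropical rational functions agreeing on W. Then Ker(ψ) = E(V(Ker(ψ))). -/
/-!
Every pair identified by `ψ` is identified by both `ψᵢ`, so `V(Ker ψᵢ) ⊆ V(Ker ψ)`. Hence two
functions that agree on `V(Ker ψ)` agree on both `V(Ker ψᵢ)`; by hypothesis they are then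
identified by `ψ₁` and by `ψ₂`, hence by `ψ = (ψ₁, ψ₂)`.
-/

noncomputable section

open Tropical

section AgreementLocus

variable {R X Y : Type*} (ev : R → X → Y)

/-- The variety `V(ρ)` of the paper. -/
def agreementLocus (ρ : R → R → Prop) : Set X :=
  {x | ∀ a b, ρ a b → ev a x = ev b x}

/-- `Ker f = E(V(Ker f))`. -/
def IsAgreementKernel {A : Type*} (f : R → A) : Prop :=
  ∀ a b, f a = f b ↔ ∀ x ∈ agreementLocus ev (fun a b => f a = f b), ev a x = ev b x

variable {ev}

theorem agreementLocus_anti {ρ σ : R → R → Prop} (h : ∀ a b, ρ a b → σ a b) :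
    agreementLocus ev σ ⊆ agreementLocus ev ρ :=
  fun _ hx a b hab => hx a b (h a b hab)

theorem agreementLocus_comp_subset {A B : Type*} (f : R → A) (g : A → B) :
    agreementLocus ev (fun a b => g (f a) = g (f b)) ⊆ agreementLocus ev (fun a b => f a = f b) :=
  agreementLocus_anti fun _ _ hab => congrArg g hab

theorem IsAgreementKernel.prod {A B : Type*} {φ : R → A × B}
    (h₁ : IsAgreementKernel ev (Prod.fst ∘ φ)) (h₂ : IsAgreementKernel ev (Prod.snd ∘ φ)) :
    IsAgreementKernel ev φ := by
  intro a b
  refine ⟨fun hab x hx => hx a b hab, fun hagree => Prod.ext ?_ ?_⟩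
  · exact (h₁ a b).2 fun x hx => hagree x (agreementLocus_comp_subset φ Prod.fst hx)
  · exact (h₂ a b).2 fun x hx => hagree x (agreementLocus_comp_subset φ Prod.snd hx)

end AgreementLocus

theorem ker_eq_agreement_on_variety_general (n : ℕ)
    (R : Type*) [CommSemiring R]
    (ev : R →+* ((Fin n → ℝ) → T))
    (S₁ S₂ : Type*) [CommSemiring S₁] [CommSemiring S₂]
    (ψ : R →+* S₁ × S₂)
    (hE₁ : ∀ a b : R, (ψ a).1 = (ψ b).1 ↔
      ∀ x ∈ {x : Fin n → ℝ | ∀ a b : R, (ψ a).1 = (ψ b).1 → ev a x = ev b x},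
        ev a x = ev b x)
    (hE₂ : ∀ a b : R, (ψ a).2 = (ψ b).2 ↔
      ∀ x ∈ {x : Fin n → ℝ | ∀ a b : R, (ψ a).2 = (ψ b).2 → ev a x = ev b x},
        ev a x = ev b x) :
    ∀ a b : R, ψ a = ψ b ↔
      ∀ x ∈ {x : Fin n → ℝ | ∀ a b : R, ψ a = ψ b → ev a x = ev b x},
        ev a x = ev b x :=
  IsAgreementKernel.prod (ev := ⇑ev) (φ := ⇑ψ) hE₁ hE₂

/-- Let `ψ` be a surjective `T`-algebra homomorphism from the tropical rational function
semifield in `n` variables (elements modeled as functions `ℝⁿ → T` via an injective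
evaluation homomorphism `ev`) onto the pseudodirect product `S₁ ⋈ S₂` of semifields
over `T`, with `ψᵢ = πᵢ ∘ ψ`. If `Ker(ψᵢ) = E(V(Ker ψᵢ))` for `i = 1, 2` (pairs are
related exactly when their evaluations agree on the congruence variety), then
`Ker(ψ) = E(V(Ker ψ))`. -/
theorem ker_eq_agreement_on_variety (n : ℕ)
    (R : Type*) [CommSemiring R]
    (ev : R →+* ((Fin n → ℝ) → T)) (hev : Function.Injective ev)
    (τR : T →+* R) (hconst : ∀ t : T, ev (τR t) = fun _ => t)
    (S₁ S₂ : Type*) [CommSemiring S₁] [CommSemiring S₂]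
    (τ₁ : T →+* S₁) (τ₂ : T →+* S₂)
    (hτ₁ : Function.Injective τ₁) (hτ₂ : Function.Injective τ₂)
    (hinv₁ : ∀ a : S₁, a ≠ 0 → ∃ b, a * b = 1)
    (hinv₂ : ∀ a : S₂, a ≠ 0 → ∃ b, a * b = 1)
    (ψ : R →+* S₁ × S₂) (hψτ : ∀ t : T, ψ (τR t) = (τ₁ t, τ₂ t))
    (hrange : ∀ r : R, ((ψ r).1 ≠ 0 ∧ (ψ r).2 ≠ 0) ∨ ψ r = 0)
    (hsurj : ∀ p : S₁ × S₂, ((p.1 ≠ 0 ∧ p.2 ≠ 0) ∨ p = 0) → ∃ r : R, ψ r = p)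
    (hE₁ : ∀ a b : R, (ψ a).1 = (ψ b).1 ↔
      ∀ x ∈ {x : Fin n → ℝ | ∀ a b : R, (ψ a).1 = (ψ b).1 → ev a x = ev b x},
        ev a x = ev b x)
    (hE₂ : ∀ a b : R, (ψ a).2 = (ψ b).2 ↔
      ∀ x ∈ {x : Fin n → ℝ | ∀ a b : R, (ψ a).2 = (ψ b).2 → ev a x = ev b x},
        ev a x = ev b x) :
    ∀ a b : R, ψ a = ψ b ↔
      ∀ x ∈ {x : Fin n → ℝ | ∀ a b : R, ψ a = ψ b → ev a x = ev b x},
        ev a x = ev b x :=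
  ker_eq_agreement_on_variety_general n R ev S₁ S₂ ψ hE₁ hE₂
end
end
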